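/- With abstention and c ≥ 1/2, 0 < K ≤ 4, the optimal threshold is T* = K/2 and the expected manipulation by unqualified agents equals (1/4)·∫_{-K/2}^{0} (K/2 - x) dx = 3K²/32. -/
import Mathlib


open intervalIntegral

/-- The principal's piecewise expected loss in the uniform case study (valid for `0 < K ≤ 4`). -/
noncomputable def pieceLoss (K c T : ℝ) : ℝ :=
  if T ≤ K / 2 then (K - T) / 4
  else if T ≤ K then (T * (2 * c - 1) + K * (1 - c)) / 4
  else c * (2 * T - K) / 4

/-- for `c ≥ 1/2` and `0 < K ≤ 4`, the optimal threshold is `T* = K/2`,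
and the expected manipulation by unqualified agents is
`(1/4)·∫_{-K/2}^0 (K/2 - x) dx = 3K²/32`. -/
theorem expected_manipulation_with_abstention_high_c (K c : ℝ)
    (hK : 0 < K) (hK4 : K ≤ 4) (hc : 1 / 2 ≤ c) (hc1 : c ≤ 1) :
    (∀ T ∈ Set.Icc (0 : ℝ) 2, pieceLoss K c (K / 2) ≤ pieceLoss K c T) ∧
    (1 / 4) * (∫ x in (-(K / 2))..(0 : ℝ), (K / 2 - x)) = 3 * K ^ 2 / 32 := by
  constructor
  · intro T hT
    unfold pieceLoss
    simp only [le_refl, if_true]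
    by_cases h1 : T ≤ K / 2
    · rw [if_pos h1]; linarith
    · rw [if_neg h1]
      by_cases h2 : T ≤ K
      · rw [if_pos h2]; nlinarith
      · rw [if_neg h2]; nlinarith
  · have : (∫ x in (-(K / 2))..(0 : ℝ), (K / 2 - x)) =
        (∫ x in (-(K / 2))..(0 : ℝ), (K / 2 : ℝ)) - ∫ x in (-(K / 2))..(0 : ℝ), x := by
      rw [← intervalIntegral.integral_sub intervalIntegrable_const
        (intervalIntegral.intervalIntegrable_id)]
    rw [this, integral_const, integral_id, smul_eq_mul]
    ring
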